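/- arXiv:1802.07209 — 3 statements merged into one kernel-verified Lean document; each statement's English description precedes it below -/
import Mathlib

section
/- Let G be a finite graph with arboricity a > 0 and n vertices, and ε a real with 0 < ε ≤ 2. Define a sequence of induced subgraphs G_0 = G, and G_{i+1} = the subgraph of G_i induced by vertices of degree (in G_i) greater than (2+ε)·a. Then G_i has at most (2/(2+ε))^i · n vertices. -/
open Finset
open scoped Classical

/-- `G` admits a partition of its edge set into at most `a` forests. -/
def HasForestDecomp {V : Type*} (G : SimpleGraph V) (a : ℕ) : Prop :=
  ∃ F : Fin a → SimpleGraph V,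
    (∀ i, F i ≤ G ∧ (F i).IsAcyclic) ∧
    ∀ e ∈ G.edgeSet, ∃! i, e ∈ (F i).edgeSet

/-- The arboricity of a graph: the minimum number of forests partitioning its edge set. -/
noncomputable def arboricity {V : Type*} (G : SimpleGraph V) : ℕ :=
  sInf {a | HasForestDecomp G a}

/-- `peel G a ε i` is the vertex set of the graph `G_i`: `G_0 = G`, and `G_{i+1}` is the
subgraph of `G_i` induced by the vertices whose degree in `G_i` exceeds `(2+ε)·a`. -/
noncomputable def peel {V : Type*} [Fintype V] (G : SimpleGraph V) (a : ℕ) (ε : ℝ) :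
    ℕ → Finset V
  | 0 => Finset.univ
  | (i + 1) => (peel G a ε i).filter
      (fun v => (2 + ε) * a < (((peel G a ε i).filter (fun u => G.Adj v u)).card : ℝ))

/-!
Each `G_i` is an induced subgraph of `G`, so its edges split into `a` forests, and a forest on
`m` vertices has at most `m` edges. Hence the degrees in `G_i` sum to at most `2a·|G_i|`, and
by Markov's inequality at most a `2/(2+ε)` fraction of the vertices of `G_i` have degree above
`(2+ε)a`. Iterating this gives the geometric bound.
-/

namespace SimpleGraph

variable {V : Type*} {G : SimpleGraph V}

/-- An endpoint of a longest path in a forest is a leaf. -/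
theorem IsAcyclic.exists_degree_eq_one [Fintype V] [DecidableRel G.Adj] (hG : G.IsAcyclic)
    (hE : G.edgeFinset.Nonempty) : ∃ v, G.degree v = 1 := by
  obtain ⟨e, he⟩ := hE
  induction e using Sym2.ind with | _ x y => ?_
  have : Nonempty V := ⟨x⟩
  obtain ⟨u, v, p, hp, hmax⟩ := Walk.exists_isPath_forall_isPath_length_le_length G
  have hnil : ¬p.Nil := fun h => by
    have := hmax _ _ _ (Path.singleton (mem_edgeFinset.1 he)).2
    rw [h.length_eq_zero] at this
    exact Nat.not_succ_le_zero 0 this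
  refine ⟨u, degree_eq_one_iff_existsUnique_adj.2 ⟨p.snd, p.adj_snd hnil, fun w hw => ?_⟩⟩
  refine hG.eq_snd_of_adj_start hp hw (by_contra fun hwp => ?_)
  simpa using hmax _ _ _ (hp.cons (by simpa using hwp) : (p.cons hw.symm).IsPath)

/-- Deleting the edge at a leaf removes one edge and at least one vertex of the support. -/
theorem IsAcyclic.card_edgeFinset_le_card_support [Fintype V] [DecidableEq V]
    [DecidableRel G.Adj] (hG : G.IsAcyclic) : #G.edgeFinset ≤ Fintype.card G.support := by
  induction hn : #G.edgeFinset generalizing G with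
  | zero => exact Nat.zero_le _
  | succ n ih =>
    obtain ⟨v, hv⟩ := hG.exists_degree_eq_one (Finset.card_pos.1 (by omega))
    have hvG : v ∈ G.support := (G.degree_pos_iff_mem_support v).1 (by omega)
    have hsupp : 0 < Fintype.card G.support := Fintype.card_pos_iff.2 ⟨⟨v, hvG⟩⟩
    have hedges := G.card_edgeFinset_deleteIncidenceSet v
    have hsupp' := G.card_support_deleteIncidenceSet hvG
    have := ih (hG.anti (G.deleteIncidenceSet_le v)) (by omega)
    omega

theorem IsAcyclic.card_edgeFinset_le [Fintype V] [DecidableEq V] [DecidableRel G.Adj]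
    (hG : G.IsAcyclic) : #G.edgeFinset ≤ Fintype.card V :=
  hG.card_edgeFinset_le_card_support.trans (Fintype.card_subtype_le _)

theorem degree_induce_finset [DecidableRel G.Adj] (S : Finset V) (v : (S : Set V))
    [Fintype ((G.induce (S : Set V)).neighborSet v)] :
    (G.induce (S : Set V)).degree v = #{u ∈ S | G.Adj v u} := by
  rw [← card_neighborFinset_eq_degree]
  refine Finset.card_bij (fun u _ => u.1) ?_ ?_ ?_
  · simp
  · simp
  · simpa using fun u hu h => ⟨h, hu⟩

theorem IsAcyclic.sum_card_filter_adj_le [DecidableEq V] [DecidableRel G.Adj]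
    (hG : G.IsAcyclic) (S : Finset V) : ∑ v ∈ S, #{u ∈ S | G.Adj v u} ≤ 2 * #S :=
  calc ∑ v ∈ S, #{u ∈ S | G.Adj v u}
      = ∑ v : (S : Set V), (G.induce (S : Set V)).degree v := by
        rw [← Finset.sum_coe_sort S]
        simp_rw [degree_induce_finset]
        rfl
    _ = 2 * #(G.induce (S : Set V)).edgeFinset := sum_degrees_eq_twice_card_edges _
    _ ≤ 2 * #S := by
        grw [(hG.induce _).card_edgeFinset_le]
        simp

end SimpleGraph

theorem HasForestDecomp.sum_card_filter_adj_le {V : Type*} [DecidableEq V] {G : SimpleGraph V}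
    [DecidableRel G.Adj] {a : ℕ} (hG : HasForestDecomp G a) (S : Finset V) :
    ∑ v ∈ S, #{u ∈ S | G.Adj v u} ≤ 2 * a * #S := by
  obtain ⟨F, hF, hcover⟩ := hG
  have hdeg (v : V) : #{u ∈ S | G.Adj v u} ≤ ∑ j, #{u ∈ S | (F j).Adj v u} := by
    refine (Finset.card_le_card fun u hu => ?_).trans Finset.card_biUnion_le
    obtain ⟨huS, hvu⟩ := Finset.mem_filter.1 hu
    obtain ⟨j, hj, -⟩ := hcover s(v, u) hvu
    exact Finset.mem_biUnion.2 ⟨j, Finset.mem_univ j, Finset.mem_filter.2 ⟨huS, hj⟩⟩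
  calc ∑ v ∈ S, #{u ∈ S | G.Adj v u}
      ≤ ∑ v ∈ S, ∑ j, #{u ∈ S | (F j).Adj v u} := Finset.sum_le_sum fun v _ => hdeg v
    _ = ∑ j, ∑ v ∈ S, #{u ∈ S | (F j).Adj v u} := Finset.sum_comm
    _ ≤ ∑ _j : Fin a, 2 * #S := Finset.sum_le_sum fun j _ => (hF j).2.sum_card_filter_adj_le S
    _ = 2 * a * #S := by simp [mul_comm, mul_left_comm]

theorem hasForestDecomp_arboricity {V : Type*} {G : SimpleGraph V} (h : 0 < arboricity G) :
    HasForestDecomp G (arboricity G) :=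
  Nat.sInf_mem (Nat.nonempty_of_pos_sInf h)

theorem Finset.card_filter_lt_mul_le_sum {ι R : Type*} [Semiring R] [PartialOrder R]
    [IsOrderedRing R] (s : Finset ι) (f : ι → R) (hf : ∀ x ∈ s, 0 ≤ f x) (c : R) :
    #{x ∈ s | c < f x} * c ≤ ∑ x ∈ s, f x :=
  calc #{x ∈ s | c < f x} * c
      ≤ ∑ x ∈ s with c < f x, f x := by
        simpa using Finset.card_nsmul_le_sum _ f c fun x hx => (Finset.mem_filter.1 hx).2.le
    _ ≤ ∑ x ∈ s, f x := Finset.sum_le_sum_of_subset_of_nonneg (Finset.filter_subset _ _)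
        fun x hx _ => hf x hx

theorem card_peel_succ_le {V : Type*} [Fintype V] {G : SimpleGraph V} {a : ℕ}
    (hG : HasForestDecomp G a) (ha : 0 < a) {ε : ℝ} (hε : 0 < 2 + ε) (i : ℕ) :
    (#(peel G a ε (i + 1)) : ℝ) ≤ 2 / (2 + ε) * #(peel G a ε i) := by
  set S := peel G a ε i
  have hsum : #(peel G a ε (i + 1)) * ((2 + ε) * a) ≤ 2 * a * (#S : ℝ) :=
    calc #(peel G a ε (i + 1)) * ((2 + ε) * a)
        ≤ ∑ v ∈ S, (#{u ∈ S | G.Adj v u} : ℝ) :=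
          Finset.card_filter_lt_mul_le_sum S _ (fun _ _ => Nat.cast_nonneg _) _
      _ ≤ 2 * a * #S := by exact_mod_cast hG.sum_card_filter_adj_le S
  have hdiv : (#(peel G a ε (i + 1)) * (2 + ε)) * a ≤ (2 * #S) * (a : ℝ) := by linarith
  rw [div_mul_eq_mul_div, le_div_iff₀ hε]
  exact le_of_mul_le_mul_right hdiv (Nat.cast_pos.2 ha)

theorem stmt4_general {V : Type*} [Fintype V] (G : SimpleGraph V)
    (a : ℕ) (ha : arboricity G = a) (hapos : 0 < a)
    (ε : ℝ) (hε0 : 0 < ε) (i : ℕ) :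
    ((peel G a ε i).card : ℝ) ≤ (2 / (2 + ε)) ^ i * (Fintype.card V : ℝ) := by
  have hG : HasForestDecomp G a := ha ▸ hasForestDecomp_arboricity (ha ▸ hapos)
  induction i with
  | zero => simp [peel]
  | succ i ih =>
    calc (#(peel G a ε (i + 1)) : ℝ) ≤ 2 / (2 + ε) * #(peel G a ε i) :=
          card_peel_succ_le hG hapos (by linarith) i
      _ ≤ 2 / (2 + ε) * ((2 / (2 + ε)) ^ i * Fintype.card V) := by gcongr
      _ = (2 / (2 + ε)) ^ (i + 1) * Fintype.card V := by ring

/-- For a finite graph `G` with arboricity `a > 0` on `n` vertices and `0 < ε ≤ 2`,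
the iterated induced subgraph `G_i` (keeping only vertices of degree `> (2+ε)·a`)
has at most `(2/(2+ε))^i · n` vertices. -/
theorem stmt4 {V : Type*} [Fintype V] [DecidableEq V] (G : SimpleGraph V)
    [DecidableRel G.Adj] (a : ℕ) (ha : arboricity G = a) (hapos : 0 < a)
    (ε : ℝ) (hε0 : 0 < ε) (hε2 : ε ≤ 2) (i : ℕ) :
    ((peel G a ε i).card : ℝ) ≤ (2 / (2 + ε)) ^ i * (Fintype.card V : ℝ) :=
  stmt4_general G a ha hapos ε hε0 i
end

section
/- Let G be a finite graph with a partial acyclic orientation in which every vertex has out-degree at most D and at most d incident unoriented edges. Suppose each vertex selects a color in {1,...,k} used by the minimum number of its out-neighbors (parents). Then for each color class i, the subgraph induced by vertices of color i has arboricity at most ⌊D/k⌋ + d. -/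
/-!
Order the vertices linearly so that every parent precedes its child. Inside a colour class, the
earlier neighbours of a vertex are either parents of its own colour, of which there are at most
`⌊D/k⌋` by pigeonhole because its colour is the rarest among its parents, or are joined to it by
an unoriented edge, of which there are at most `d`. A graph in which every vertex has at most `m`
earlier neighbours splits into `m` forests: label the earlier neighbours of each vertex injectively
by `Fin m`; within one label class every vertex has at most one earlier neighbour, whereas the
latest vertex of a cycle has two.
-/

open Finset
open scoped Classical

open Function

namespace SimpleGraph

variable {W β : Type*} [LinearOrder β] {H : SimpleGraph W} {r : W → β}

theorem isAcyclic_of_lowerNeighbor_unique (hr : Injective r)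
    (h : ∀ ⦃v u w⦄, H.Adj v u → H.Adj v w → r u < r v → r w < r v → u = w) :
    H.IsAcyclic := by
  intro v c hc
  obtain ⟨m, hm, hmax⟩ := c.support.toFinset.exists_max_image r ⟨v, by simp⟩
  set c' := c.rotate m (List.mem_toFinset.mp hm)
  have hc' : c'.IsCycle := hc.rotate _
  have lower : ∀ x ∈ c'.support, H.Adj m x → r x < r m := fun x hx hadj =>
    (hmax x (by simpa [c'] using hx)).lt_of_ne (hr.ne hadj.ne.symm)
  exact hc'.snd_ne_penultimate <| h (c'.adj_snd hc'.not_nil) (c'.adj_penultimate hc'.not_nil).symm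
    (lower _ (c'.getVert_mem_support _) (c'.adj_snd hc'.not_nil))
    (lower _ (c'.getVert_mem_support _) (c'.adj_penultimate hc'.not_nil).symm)

theorem hasForestDecomp_of_card_lowerNeighbors_le [Fintype W] [DecidableRel H.Adj]
    (hr : Injective r) {m : ℕ}
    (hlow : ∀ v, #{u | H.Adj v u ∧ r u < r v} ≤ m) : HasForestDecomp H m := by
  have hemb : ∀ v, Nonempty ({u // H.Adj v u ∧ r u < r v} ↪ Fin m) := fun v =>
    Embedding.nonempty_of_card_le (by simpa [Fintype.card_subtype] using hlow v)
  have label : ∀ v, {u // H.Adj v u ∧ r u < r v} ↪ Fin m := fun v => (hemb v).some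
  let down (j : Fin m) (v u : W) : Prop := ∃ h : H.Adj v u ∧ r u < r v, label v ⟨u, h⟩ = j
  have down_of_adj {j v u} (hadj : (fromRel (down j)).Adj v u) (hlt : r u < r v) :
      down j v u :=
    hadj.2.resolve_right fun ⟨h, _⟩ => lt_asymm h.2 hlt
  have unique_label {u w} (hadj : H.Adj u w) (hlt : r w < r u) :
      ∃! j, s(u, w) ∈ (fromRel (down j)).edgeSet :=
    ⟨label u ⟨w, hadj, hlt⟩, ⟨hadj.ne, .inl ⟨⟨hadj, hlt⟩, rfl⟩⟩,
      fun j hj => (down_of_adj hj hlt).2.symm⟩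
  refine ⟨fun j => fromRel (down j), fun j => ⟨?_, ?_⟩, ?_⟩
  · intro u w hadj
    rcases hadj.2 with ⟨h, _⟩ | ⟨h, _⟩
    exacts [h.1, h.1.symm]
  · refine isAcyclic_of_lowerNeighbor_unique hr fun v u w hu hw hru hrw => ?_
    obtain ⟨_, hju⟩ := down_of_adj hu hru
    obtain ⟨_, hjw⟩ := down_of_adj hw hrw
    exact congrArg Subtype.val ((label v).injective (hju.trans hjw.symm))
  · rintro ⟨u, w⟩ hadj
    rcases (hr.ne hadj.ne).lt_or_gt with hlt | hlt
    · simpa only [Sym2.eq_swap] using unique_label hadj.symm hlt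
    · exact unique_label hadj hlt

theorem card_lowerNeighbors_induce_le [Fintype W] [DecidableRel H.Adj] {o : W → W → Prop}
    [DecidableRel o] (hro : ∀ u v, o v u → r u < r v) (S : Set W) [DecidablePred (· ∈ S)]
    [Fintype S] (v : S) :
    #{u : S | (H.induce S).Adj v u ∧ r u < r v} ≤
      #{u | o v u ∧ u ∈ S} + #{u | H.Adj v u ∧ ¬ o v u ∧ ¬ o u v} := by
  refine (card_le_card_of_injOn Subtype.val (fun u hu => ?_) Subtype.val_injective.injOn).trans
    (card_union_le _ _)
  simp only [coe_filter, mem_univ, true_and, Set.mem_ofPred_eq, comap_adj] at hu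
  obtain ⟨hadj, hlt⟩ := hu
  by_cases hvu : o v u
  · simp [hvu]
  · simpa [hvu] using ⟨hadj, fun h => lt_asymm hlt (hro _ _ h)⟩

end SimpleGraph

theorem exists_injective_rank_of_acyclic {V : Type*} [Fintype V] {o : V → V → Prop}
    (hacyc : ∀ v, ¬ Relation.TransGen o v v) :
    ∃ r : V → ℕ ×ₗ Fin (Fintype.card V), Injective r ∧ ∀ u v, o v u → r u < r v := by
  refine ⟨fun v => toLex (#{u | Relation.TransGen o v u}, Fintype.equivFin V v),
    fun u v h => (Fintype.equivFin V).injective (congrArg Prod.snd (toLex.injective h)),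
    fun u v hvu => Prod.Lex.toLex_lt_toLex.2 (.inl (card_lt_card ?_))⟩
  refine (ssubset_iff_of_subset fun w hw => ?_).2 ⟨u, ?_, ?_⟩
  · simp only [mem_filter, mem_univ, true_and] at hw ⊢
    exact .head hvu hw
  · simpa using .single hvu
  · simpa using hacyc u

theorem mul_card_le_of_le_card_fiber {α ι : Type*} [Fintype ι] [DecidableEq ι] {s : Finset α}
    {f : α → ι} {a : ℕ} (h : ∀ j, a ≤ #{x ∈ s | f x = j}) : a * Fintype.card ι ≤ #s := by
  by_contra! hlt
  obtain ⟨j, -, hj⟩ := exists_card_fiber_lt_of_card_lt_mul (t := univ) (f := f)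
    (by simpa [mul_comm] using hlt)
  exact (h j).not_gt hj

theorem stmt10_general {V : Type*} [Fintype V] (G : SimpleGraph V)
    [DecidableRel G.Adj] (D d k : ℕ)
    (o : V → V → Prop) [DecidableRel o]
    (hacyc : ∀ v, ¬ Relation.TransGen o v v)
    (houtdeg : ∀ v, (Finset.univ.filter (fun u => o v u)).card ≤ D)
    (hdef : ∀ v, (Finset.univ.filter (fun u => G.Adj v u ∧ ¬ o v u ∧ ¬ o u v)).card ≤ d)
    (col : V → Fin k)
    (hmin : ∀ v (j : Fin k),
      (Finset.univ.filter (fun u => o v u ∧ col u = col v)).card ≤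
        (Finset.univ.filter (fun u => o v u ∧ col u = j)).card) :
    ∀ i : Fin k, arboricity (G.induce {v | col v = i}) ≤ D / k + d := by
  intro i
  obtain ⟨r, hr, hro⟩ := exists_injective_rank_of_acyclic hacyc
  refine Nat.sInf_le <| SimpleGraph.hasForestDecomp_of_card_lowerNeighbors_le
    (hr.comp Subtype.val_injective) fun v => ?_
  have hparents : #{u | o v u ∧ col u = col v} ≤ D / k := by
    refine (Nat.le_div_iff_mul_le i.pos).2 ?_
    simpa using (mul_card_le_of_le_card_fiber (s := {u | o v u}) (f := col) fun j => by
      simpa only [filter_filter] using hmin v j).trans (houtdeg v)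
  have hv : col v = i := v.2
  refine (SimpleGraph.card_lowerNeighbors_induce_le hro _ v).trans (add_le_add ?_ (hdef v))
  simpa only [Set.mem_ofPred_eq, hv] using hparents

/-- Let `G` have a partial acyclic orientation `o` with out-degree at most `D` and at
most `d` unoriented edges incident to each vertex.  If every vertex selects a color in
`Fin k` used by the minimum number of its parents (out-neighbors), then each color
class induces a subgraph of arboricity at most `⌊D/k⌋ + d`. -/
theorem stmt10 {V : Type*} [Fintype V] [DecidableEq V] (G : SimpleGraph V)
    [DecidableRel G.Adj] (D d k : ℕ) (hk : 0 < k)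
    (o : V → V → Prop) [DecidableRel o]
    (hsub : ∀ u v, o u v → G.Adj u v)
    (hanti : ∀ u v, ¬ (o u v ∧ o v u))
    (hacyc : ∀ v, ¬ Relation.TransGen o v v)
    (houtdeg : ∀ v, (Finset.univ.filter (fun u => o v u)).card ≤ D)
    (hdef : ∀ v, (Finset.univ.filter (fun u => G.Adj v u ∧ ¬ o v u ∧ ¬ o u v)).card ≤ d)
    (col : V → Fin k)
    (hmin : ∀ v (j : Fin k),
      (Finset.univ.filter (fun u => o v u ∧ col u = col v)).card ≤
        (Finset.univ.filter (fun u => o v u ∧ col u = j)).card) :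
    ∀ i : Fin k, arboricity (G.induce {v | col v = i}) ≤ D / k + d :=
  stmt10_general G D d k o hacyc houtdeg hdef col hmin
end

section
/- Let T = ⌈(2/ε)·log₂ a⌉ and suppose a finite graph G with arboricity a ≥ 2 has the property that iteratively removing, for T rounds, all vertices with at most (2+ε)·a remaining neighbors leaves a set S of vertices. Then the subgraph induced by S has at most (2/(2+ε))^T · a · |V(G)| edges, and in particular at most C·|V(G)| edges where C depends only on ε. -/
open Finset
open scoped Classical

/-- The number of edges of `G` with both endpoints in `S`, i.e. the number of edges of
the subgraph of `G` induced by `S`. -/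
noncomputable def inducedEdgeCount {V : Type*} [Fintype V] [DecidableEq V]
    (G : SimpleGraph V) [DecidableRel G.Adj] (S : Finset V) : ℕ :=
  (G.edgeFinset.filter (fun e => ∀ v ∈ e, v ∈ S)).card

namespace ArbAux
open SimpleGraph

variable {W : Type*}

lemma endpoint_of_dist_le {F : SimpleGraph W} {r v y : W} (p : F.Walk r v)
    (hy : y ∈ p.support) (hd : p.length ≤ F.dist r y) : y = v := by
  have h1 : F.dist r y ≤ (p.takeUntil y hy).length := SimpleGraph.dist_le _
  have h2 := SimpleGraph.Walk.length_takeUntil_le p hy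
  have h3 : (p.takeUntil y hy).length + (p.dropUntil y hy).length = p.length := by
    rw [← SimpleGraph.Walk.length_append, SimpleGraph.Walk.take_spec]
  have h0 : (p.dropUntil y hy).length = 0 := by omega
  exact SimpleGraph.Walk.eq_of_length_eq_zero h0

lemma isPath_concat {F : SimpleGraph W} {u v w : W} {p : F.Walk u v} (hp : p.IsPath)
    (h : F.Adj v w) (hw : w ∉ p.support) : (p.concat h).IsPath := by
  rw [← SimpleGraph.Walk.isPath_reverse_iff, SimpleGraph.Walk.reverse_concat]
  exact hp.reverse.cons (by simpa [SimpleGraph.Walk.support_reverse] using hw)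

lemma adj_dist_ne {F : SimpleGraph W} (hF : F.IsAcyclic) {r u v : W}
    (hru : F.Reachable r u) (huv : F.Adj u v) : F.dist r u ≠ F.dist r v := by
  intro hd
  obtain ⟨p, hp, hpl⟩ := hru.exists_path_of_dist
  obtain ⟨q, hq, hql⟩ := (hru.trans huv.reachable).exists_path_of_dist
  have hv : v ∉ p.support := by
    intro hmem
    exact huv.ne' (endpoint_of_dist_le p hmem (by omega))
  have hp' : (p.concat huv).IsPath := isPath_concat hp huv hv
  have := hF.path_unique ⟨p.concat huv, hp'⟩ ⟨q, hq⟩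
  have hlen := congrArg (fun P : F.Path r v => P.1.length) this
  simp only [SimpleGraph.Walk.length_concat] at hlen
  omega

lemma far_inj {F : SimpleGraph W} (hF : F.IsAcyclic) {r x u v : W}
    (hru : F.Reachable r u) (hrv : F.Reachable r v)
    (h1 : F.Adj u x) (h2 : F.Adj v x)
    (d1 : F.dist r u < F.dist r x) (d2 : F.dist r v < F.dist r x) : u = v := by
  obtain ⟨p, hp, hpl⟩ := hru.exists_path_of_dist
  obtain ⟨q, hq, hql⟩ := hrv.exists_path_of_dist
  have hxd1 : F.dist r x ≤ F.dist r u + 1 := by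
    simpa [hpl, SimpleGraph.Walk.length_concat] using SimpleGraph.dist_le (p.concat h1)
  have hxd2 : F.dist r x ≤ F.dist r v + 1 := by
    simpa [hql, SimpleGraph.Walk.length_concat] using SimpleGraph.dist_le (q.concat h2)
  have heq1 : F.dist r u = F.dist r v := by omega
  have hxp : x ∉ p.support := by
    intro hmem
    exact h1.ne' (endpoint_of_dist_le p hmem (by omega))
  have hxq : x ∉ q.support := by
    intro hmem
    exact h2.ne' (endpoint_of_dist_le q hmem (by omega))
  have hp' : (p.concat h1).IsPath := isPath_concat hp h1 hxp
  have hq' : (q.concat h2).IsPath := isPath_concat hq h2 hxq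
  have hPQ : p.concat h1 = q.concat h2 := by
    have := hF.path_unique ⟨p.concat h1, hp'⟩ ⟨q.concat h2, hq'⟩
    exact congrArg Subtype.val this
  have hsup : p.support = q.support := by
    have := congrArg SimpleGraph.Walk.support hPQ
    simp only [SimpleGraph.Walk.support_concat] at this
    simpa [List.concat_eq_append] using this
  have huq : u ∈ q.support := hsup ▸ SimpleGraph.Walk.end_mem_support p
  exact endpoint_of_dist_le q huq (by omega)

noncomputable def far (F : SimpleGraph W) (e : Sym2 W) : W :=
  let a := (Quot.out e).1
  let b := (Quot.out e).2
  let r := Quot.out (F.connectedComponentMk a)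
  if F.dist r a < F.dist r b then b else a

lemma out_reachable (F : SimpleGraph W) (c : F.ConnectedComponent) {w : W}
    (h : F.connectedComponentMk w = c) : F.Reachable (Quot.out c) w := by
  have : F.connectedComponentMk (Quot.out c) = F.connectedComponentMk w := by
    rw [h]; exact Quot.out_eq c
  exact (SimpleGraph.ConnectedComponent.eq.mp this)

lemma far_spec {F : SimpleGraph W} (hF : F.IsAcyclic) {e : Sym2 W} (he : e ∈ F.edgeSet) :
    ∃ u, e = s(u, far F e) ∧ F.Adj u (far F e) ∧
      F.dist (Quot.out (F.connectedComponentMk (far F e))) u <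
        F.dist (Quot.out (F.connectedComponentMk (far F e))) (far F e) := by
  set a := (Quot.out e).1 with ha
  set b := (Quot.out e).2 with hb
  have hout : e = s(a, b) := by
    rw [ha, hb]
    conv_lhs => rw [← Quot.out_eq e]
  have hadj : F.Adj a b := by
    rw [hout] at he; exact he
  set r := Quot.out (F.connectedComponentMk a) with hr
  have hcomp : F.connectedComponentMk b = F.connectedComponentMk a :=
    (SimpleGraph.ConnectedComponent.sound hadj.reachable).symm
  have hra : F.Reachable r a := out_reachable F _ rfl
  have hrb : F.Reachable r b := hra.trans hadj.reachable
  have hne : F.dist r a ≠ F.dist r b := adj_dist_ne hF hra hadj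
  by_cases hlt : F.dist r a < F.dist r b
  · have hfar : far F e = b := by
      simp only [far, ← ha, ← hb, ← hr, if_pos hlt]
    refine ⟨a, ?_, ?_, ?_⟩
    · rw [hfar]; exact hout
    · rw [hfar]; exact hadj
    · rw [hfar, hcomp, ← hr]; exact hlt
  · have hlt' : F.dist r b < F.dist r a := lt_of_le_of_ne (not_lt.mp hlt) (Ne.symm hne)
    have hfar : far F e = a := by
      simp only [far, ← ha, ← hb, ← hr, if_neg hlt]
    refine ⟨b, ?_, ?_, ?_⟩
    · rw [hfar, hout]; exact Sym2.eq_swap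
    · rw [hfar]; exact hadj.symm
    · rw [hfar, ← hr]; exact hlt'

lemma acyclic_edge_bound [Fintype W] (F : SimpleGraph W) [Fintype F.edgeSet]
    (hF : F.IsAcyclic) : F.edgeFinset.card ≤ Fintype.card W := by
  have hinj : Set.InjOn (far F) F.edgeFinset := by
    intro e₁ he₁ e₂ he₂ hfe
    rw [Finset.mem_coe, SimpleGraph.mem_edgeFinset] at he₁ he₂
    obtain ⟨u₁, h1e, h1a, h1d⟩ := far_spec hF he₁
    obtain ⟨u₂, h2e, h2a, h2d⟩ := far_spec hF he₂
    rw [hfe] at h1e h1a h1d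
    set x := far F e₂
    have hr1 : F.Reachable (Quot.out (F.connectedComponentMk x)) u₁ :=
      (out_reachable F _ rfl).trans h1a.symm.reachable
    have hr2 : F.Reachable (Quot.out (F.connectedComponentMk x)) u₂ :=
      (out_reachable F _ rfl).trans h2a.symm.reachable
    have := far_inj hF hr1 hr2 h1a h2a h1d h2d
    rw [h1e, h2e, this]
  have h : F.edgeFinset.card ≤ (Finset.univ : Finset W).card :=
    Finset.card_le_card_of_injOn (far F) (fun e _ => Finset.mem_univ _) hinj
  simpa using h

lemma bridge_card {V : Type*} [Fintype V] (H : SimpleGraph V) (S : Finset V) :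
    ((SimpleGraph.induce (↑S : Set V) H).edgeFinset.card)
      = (H.edgeFinset.filter (fun e => ∀ v ∈ e, v ∈ S)).card := by
  apply Finset.card_bij (fun e _ => Sym2.map Subtype.val e)
  · intro e he
    induction e with
    | _ u v =>
      rw [SimpleGraph.mem_edgeFinset, SimpleGraph.mem_edgeSet] at he
      simp only [Sym2.map_pair_eq, Finset.mem_filter, SimpleGraph.mem_edgeFinset,
        SimpleGraph.mem_edgeSet]
      refine ⟨he, ?_⟩
      intro w hw
      rcases Sym2.mem_iff.mp hw with h | h
      · rw [h]; exact u.2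
      · rw [h]; exact v.2
  · intro e₁ _ e₂ _ h
    exact Sym2.map.injective Subtype.val_injective h
  · intro e he
    rw [Finset.mem_filter, SimpleGraph.mem_edgeFinset] at he
    induction e with
    | _ u v =>
      obtain ⟨hadj', hmem⟩ := he
      have hadj : H.Adj u v := (SimpleGraph.mem_edgeSet H).mp hadj'
      have hu : u ∈ S := hmem u (Sym2.mem_mk_left u v)
      have hv : v ∈ S := hmem v (Sym2.mem_mk_right u v)
      refine ⟨s(⟨u, hu⟩, ⟨v, hv⟩), ?_, ?_⟩
      · rw [SimpleGraph.mem_edgeFinset, SimpleGraph.mem_edgeSet]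
        exact hadj
      · simp [Sym2.map_pair_eq]

lemma degree_induce {V : Type*} [Fintype V] (H : SimpleGraph V)
    (S : Finset V) (v : (↑S : Set V)) :
    (SimpleGraph.induce (↑S : Set V) H).degree v
      = (S.filter (fun u => H.Adj ↑v u)).card := by
  rw [SimpleGraph.degree]
  refine Finset.card_bij (s := (SimpleGraph.induce (↑S : Set V) H).neighborFinset v)
    (t := S.filter (fun u => H.Adj ↑v u)) (fun u _ => (u : V)) ?_ ?_ ?_
  · intro u hu
    rw [SimpleGraph.mem_neighborFinset] at hu
    simp only [Finset.mem_filter]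
    exact ⟨u.2, hu⟩
  · intro u₁ _ u₂ _ h
    exact Subtype.val_injective h
  · intro u hu
    rw [Finset.mem_filter] at hu
    exact ⟨⟨u, hu.1⟩, by rw [SimpleGraph.mem_neighborFinset]; exact hu.2, rfl⟩

lemma handshake {V : Type*} [Fintype V] (H : SimpleGraph V) (S : Finset V) :
    ∑ v ∈ S, (S.filter (fun u => H.Adj v u)).card
      = 2 * (H.edgeFinset.filter (fun e => ∀ v ∈ e, v ∈ S)).card := by
  rw [← bridge_card, ← SimpleGraph.sum_degrees_eq_twice_card_edges]
  rw [Finset.sum_subtype S (fun x => Iff.rfl) (fun v => (S.filter (fun u => H.Adj v u)).card)]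
  apply Finset.sum_congr rfl
  intro v _
  exact (degree_induce H S v).symm

lemma isAcyclic_induce {V : Type*} {F : SimpleGraph V} (hF : F.IsAcyclic) (s : Set V) :
    (F.induce s).IsAcyclic := by
  intro v c hc
  exact hF (c.map (SimpleGraph.Embedding.induce (G := F) s).toHom)
    (hc.map (SimpleGraph.Embedding.induce (G := F) s).injective)

lemma forest_bound {V : Type*} [Fintype V] (F : SimpleGraph V)
    (hF : F.IsAcyclic) (S : Finset V) :
    (F.edgeFinset.filter (fun e => ∀ v ∈ e, v ∈ S)).card ≤ S.card := by
  rw [← bridge_card]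
  calc (SimpleGraph.induce (↑S : Set V) F).edgeFinset.card
      ≤ Fintype.card (↑S : Set V) := acyclic_edge_bound _ (isAcyclic_induce hF _)
    _ = S.card := by simp

lemma decomp_bound {V : Type*} [Fintype V] (G : SimpleGraph V)
    {a : ℕ} (h : HasForestDecomp G a) (S : Finset V) :
    (G.edgeFinset.filter (fun e => ∀ v ∈ e, v ∈ S)).card ≤ a * S.card := by
  obtain ⟨F, hF, huniq⟩ := h
  have hsub : G.edgeFinset.filter (fun e => ∀ v ∈ e, v ∈ S)
      ⊆ Finset.univ.biUnion
        (fun i => (F i).edgeFinset.filter (fun e => ∀ v ∈ e, v ∈ S)) := by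
    intro e he
    rw [Finset.mem_filter, SimpleGraph.mem_edgeFinset] at he
    obtain ⟨i, hi, _⟩ := huniq e he.1
    exact Finset.mem_biUnion.mpr ⟨i, Finset.mem_univ _,
      Finset.mem_filter.mpr ⟨SimpleGraph.mem_edgeFinset.mpr hi, he.2⟩⟩
  calc (G.edgeFinset.filter (fun e => ∀ v ∈ e, v ∈ S)).card
      ≤ (Finset.univ.biUnion
        (fun i => (F i).edgeFinset.filter (fun e => ∀ v ∈ e, v ∈ S))).card :=
        Finset.card_le_card hsub
    _ ≤ ∑ i : Fin a, ((F i).edgeFinset.filter (fun e => ∀ v ∈ e, v ∈ S)).card :=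
        Finset.card_biUnion_le
    _ ≤ ∑ _i : Fin a, S.card := Finset.sum_le_sum fun i _ => forest_bound _ (hF i).2 S
    _ = a * S.card := by simp [mul_comm]

lemma peel_card_step {V : Type*} [Fintype V] (G : SimpleGraph V)
    {a : ℕ} (h : HasForestDecomp G a) (ha : 0 < a) (ε : ℝ) (hε0 : 0 < ε) (i : ℕ) :
    ((peel G a ε (i + 1)).card : ℝ) ≤ 2 / (2 + ε) * (peel G a ε i).card := by
  have h2ε : (0:ℝ) < 2 + ε := by linarith
  have key : ((peel G a ε (i+1)).card : ℝ) * ((2 + ε) * a)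
      ≤ ∑ v ∈ peel G a ε (i+1), (((peel G a ε i).filter (fun u => G.Adj v u)).card : ℝ) := by
    rw [← nsmul_eq_mul]
    refine Finset.card_nsmul_le_sum _ _ _ ?_
    intro v hv
    simp only [peel, Finset.mem_filter] at hv
    exact le_of_lt hv.2
  have hsub : peel G a ε (i+1) ⊆ peel G a ε i := by
    simp only [peel]; exact Finset.filter_subset _ _
  have mono : ∑ v ∈ peel G a ε (i+1), (((peel G a ε i).filter (fun u => G.Adj v u)).card : ℝ)
      ≤ ∑ v ∈ peel G a ε i, (((peel G a ε i).filter (fun u => G.Adj v u)).card : ℝ) :=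
    Finset.sum_le_sum_of_subset_of_nonneg hsub (fun _ _ _ => by positivity)
  have hhs : ∑ v ∈ peel G a ε i, (((peel G a ε i).filter (fun u => G.Adj v u)).card : ℝ)
      = 2 * ((G.edgeFinset.filter (fun e => ∀ v ∈ e, v ∈ peel G a ε i)).card : ℝ) := by
    exact_mod_cast congrArg (Nat.cast : ℕ → ℝ) (handshake G (peel G a ε i))
  have hdb : ((G.edgeFinset.filter (fun e => ∀ v ∈ e, v ∈ peel G a ε i)).card : ℝ)
      ≤ (a : ℝ) * (peel G a ε i).card := by
    exact_mod_cast decomp_bound G h (peel G a ε i)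
  have ha' : (0:ℝ) < a := by exact_mod_cast ha
  rw [div_mul_eq_mul_div, le_div_iff₀ h2ε]
  nlinarith [key, mono, hhs, hdb]

lemma peel_card_le {V : Type*} [Fintype V] (G : SimpleGraph V)
    {a : ℕ} (h : HasForestDecomp G a) (ha : 0 < a) (ε : ℝ) (hε0 : 0 < ε) (T : ℕ) :
    ((peel G a ε T).card : ℝ) ≤ (2 / (2 + ε)) ^ T * (Fintype.card V : ℝ) := by
  have h2ε : (0:ℝ) < 2 + ε := by linarith
  have hq : (0:ℝ) ≤ 2 / (2 + ε) := by positivity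
  induction T with
  | zero => simp [peel]
  | succ n ih =>
    calc ((peel G a ε (n+1)).card : ℝ)
        ≤ 2 / (2 + ε) * (peel G a ε n).card := peel_card_step G h ha ε hε0 n
      _ ≤ 2 / (2 + ε) * ((2 / (2 + ε)) ^ n * (Fintype.card V : ℝ)) := by
          exact mul_le_mul_of_nonneg_left ih hq
      _ = (2 / (2 + ε)) ^ (n+1) * (Fintype.card V : ℝ) := by ring

lemma two_rpow_le {x : ℝ} (h0 : 0 ≤ x) (h1 : x ≤ 1) : (2:ℝ) ^ x ≤ 1 + x := by
  have h := convexOn_exp.2 (Set.mem_univ (0:ℝ)) (Set.mem_univ (Real.log 2))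
    (by linarith : (0:ℝ) ≤ 1 - x) h0 (by ring)
  simp only [smul_eq_mul, mul_zero, zero_add, Real.exp_zero, Real.exp_log two_pos] at h
  rw [Real.rpow_def_of_pos two_pos]
  calc Real.exp (Real.log 2 * x) = Real.exp (x * Real.log 2) := by ring_nf
    _ ≤ (1 - x) * 1 + x * 2 := h
    _ = 1 + x := by ring

lemma pow_bound (ε : ℝ) (hε0 : 0 < ε) (hε2 : ε ≤ 2) {a : ℕ} (ha : 2 ≤ a) :
    (2 / (2 + ε)) ^ (⌈(2 / ε) * Real.logb 2 a⌉₊) * (a : ℝ) ≤ 1 := by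
  have h2ε : (0:ℝ) < 2 + ε := by linarith
  set T := ⌈(2 / ε) * Real.logb 2 a⌉₊ with hT
  have ha1 : (1:ℝ) ≤ (a:ℝ) := by exact_mod_cast Nat.one_le_of_lt ha
  have hlogb : 0 ≤ Real.logb 2 a := Real.logb_nonneg (by norm_num) ha1
  have ht0 : 0 ≤ (2 / ε) * Real.logb 2 a := by positivity
  have hTle : (2 / ε) * Real.logb 2 a ≤ (T : ℝ) := Nat.le_ceil _
  -- (a:ℝ) ≤ ((2+ε)/2)^T
  have key : (a : ℝ) ≤ ((2 + ε) / 2) ^ T := by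
    have hb : (1:ℝ) ≤ (2 + ε) / 2 := by
      rw [le_div_iff₀ (by norm_num : (0:ℝ) < 2)]; linarith
    have e1 : ((2 + ε) / 2 : ℝ) ^ T = ((2 + ε) / 2 : ℝ) ^ (T : ℝ) :=
      (Real.rpow_natCast _ T).symm
    have e2 : ((2 + ε) / 2 : ℝ) ^ ((2 / ε) * Real.logb 2 a)
        ≤ ((2 + ε) / 2 : ℝ) ^ (T : ℝ) :=
      Real.rpow_le_rpow_of_exponent_le hb hTle
    have e3 : ((2:ℝ) ^ (ε/2 : ℝ)) ^ ((2 / ε) * Real.logb 2 a)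
        ≤ ((2 + ε) / 2 : ℝ) ^ ((2 / ε) * Real.logb 2 a) := by
      refine Real.rpow_le_rpow (Real.rpow_nonneg (by norm_num) _) ?_ ht0
      have h2 := two_rpow_le (x := ε/2) (by linarith) (by linarith)
      have : ((2 + ε) / 2 : ℝ) = 1 + ε/2 := by ring
      linarith
    have e4 : ((2:ℝ) ^ (ε/2 : ℝ)) ^ ((2 / ε) * Real.logb 2 a)
        = (2:ℝ) ^ ((ε/2) * ((2 / ε) * Real.logb 2 a)) := by
      rw [← Real.rpow_mul (by norm_num : (0:ℝ) ≤ 2)]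
    have e5 : (ε/2) * ((2 / ε) * Real.logb 2 (a:ℝ)) = Real.logb 2 (a:ℝ) := by
      field_simp
    calc (a : ℝ) = (2:ℝ) ^ (Real.logb 2 (a:ℝ)) :=
          (Real.rpow_logb two_pos (by norm_num) (by linarith)).symm
      _ = ((2:ℝ) ^ (ε/2 : ℝ)) ^ ((2 / ε) * Real.logb 2 a) := by rw [e4, e5]
      _ ≤ ((2 + ε) / 2 : ℝ) ^ ((2 / ε) * Real.logb 2 a) := e3
      _ ≤ ((2 + ε) / 2 : ℝ) ^ (T : ℝ) := e2
      _ = ((2 + ε) / 2 : ℝ) ^ T := e1.symm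
  have hpos : (0:ℝ) < ((2 + ε) / 2) ^ T := by positivity
  have : (2 / (2 + ε)) ^ T = (((2 + ε) / 2) ^ T)⁻¹ := by
    rw [← inv_pow]
    congr 1
    rw [inv_div]
  rw [this]
  rw [inv_mul_le_iff₀ hpos, mul_one]
  exact key

end ArbAux

set_option maxHeartbeats 1000000 in
/-- Let `T = ⌈(2/ε)·log₂ a⌉`.  For `0 < ε ≤ 2` there is a constant `C` (depending
only on `ε`) such that for every finite graph `G` with arboricity `a ≥ 2`, iteratively
removing for `T` rounds all vertices with at most `(2+ε)·a` remaining neighbors leaves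
a set `S` of vertices whose induced subgraph has at most `(2/(2+ε))^T · a · |V|` edges,
and in particular at most `C · |V|` edges. -/
theorem stmt14 (ε : ℝ) (hε0 : 0 < ε) (hε2 : ε ≤ 2) :
    ∃ C : ℝ, ∀ (V : Type) (_ : Fintype V) (_ : DecidableEq V)
      (G : SimpleGraph V) (_ : DecidableRel G.Adj) (a : ℕ),
      arboricity G = a → 2 ≤ a →
      (inducedEdgeCount G (peel G a ε (⌈(2 / ε) * Real.logb 2 a⌉₊)) : ℝ) ≤
          (2 / (2 + ε)) ^ (⌈(2 / ε) * Real.logb 2 a⌉₊) * a * (Fintype.card V : ℝ) ∧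
        (inducedEdgeCount G (peel G a ε (⌈(2 / ε) * Real.logb 2 a⌉₊)) : ℝ) ≤
          C * (Fintype.card V : ℝ) := by
  refine ⟨1, ?_⟩
  intro V iV dV G dG a harb ha2
  set T := ⌈(2 / ε) * Real.logb 2 (a : ℝ)⌉₊ with hT
  have h2ε : (0:ℝ) < 2 + ε := by linarith
  have hne : {n | HasForestDecomp G n}.Nonempty := by
    by_contra hcon
    rw [Set.not_nonempty_iff_eq_empty] at hcon
    rw [arboricity, hcon, Nat.sInf_empty] at harb
    omega
  have hdec : HasForestDecomp G a := by
    have := Nat.sInf_mem hne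
    rwa [← arboricity, harb] at this
  have hnat : inducedEdgeCount G (peel G a ε T) ≤ a * (peel G a ε T).card := by
    have h1 := ArbAux.decomp_bound G hdec (peel G a ε T)
    unfold inducedEdgeCount
    convert h1 using 2
    congr!
  have hpeel := ArbAux.peel_card_le G hdec (by omega : 0 < a) ε hε0 T
  have first : (inducedEdgeCount G (peel G a ε T) : ℝ)
      ≤ (2 / (2 + ε)) ^ T * (a : ℝ) * (Fintype.card V : ℝ) := by
    calc (inducedEdgeCount G (peel G a ε T) : ℝ)
        ≤ (a : ℝ) * ((peel G a ε T).card : ℝ) := by exact_mod_cast hnat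
      _ ≤ (a : ℝ) * ((2 / (2 + ε)) ^ T * (Fintype.card V : ℝ)) :=
          mul_le_mul_of_nonneg_left hpeel (by positivity)
      _ = (2 / (2 + ε)) ^ T * (a : ℝ) * (Fintype.card V : ℝ) := by ring
  refine ⟨first, first.trans ?_⟩
  have hC := ArbAux.pow_bound ε hε0 hε2 ha2
  calc (2 / (2 + ε)) ^ T * (a : ℝ) * (Fintype.card V : ℝ)
      ≤ 1 * (Fintype.card V : ℝ) :=
        mul_le_mul_of_nonneg_right hC (by positivity)
    _ = 1 * (Fintype.card V : ℝ) := by ring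
end
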